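/- arXiv:1901.01108 — 4 statements merged into one kernel-verified Lean document; each statement's English description precedes it below -/
import Mathlib

section
/- If B is a right intensity matrix (a real square matrix with nonnegative off-diagonal entries and all row sums zero), then for every t ≥ 0 the matrix exp(t·B) is right stochastic, i.e., all entries are nonnegative and all row sums equal one. -/
/-!
Since `B` is nonnegative off the diagonal, `B + c • 1` is entrywise nonnegative for `c` large,
so its exponential series has nonnegative terms; adding `c • 1` only multiplies the exponential
by `Real.exp c > 0`. Zero row sums say `B *ᵥ 1 = 0`, so every term of the series but the first
annihilates `1`, and `exp (t • B) *ᵥ 1 = 1`.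
-/

open Matrix

namespace Matrix

variable {n : Type*} [Fintype n] [DecidableEq n]

theorem hasSum_exp {𝕂 : Type*} [RCLike 𝕂] (A : Matrix n n 𝕂) :
    HasSum (fun k : ℕ => (k.factorial⁻¹ : 𝕂) • A ^ k) (NormedSpace.exp A) :=
  open scoped Norms.Operator in NormedSpace.exp_series_hasSum_exp' A

theorem pow_mulVec_eq_zero {R : Type*} [Semiring R] {A : Matrix n n R} {v : n → R}
    (h : A *ᵥ v = 0) {k : ℕ} (hk : k ≠ 0) : A ^ k *ᵥ v = 0 := by
  obtain ⟨k, rfl⟩ := Nat.exists_eq_succ_of_ne_zero hk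
  rw [pow_succ, ← mulVec_mulVec, h, mulVec_zero]

theorem exp_mulVec_of_mulVec_eq_zero {𝕂 : Type*} [RCLike 𝕂] {A : Matrix n n 𝕂} {v : n → 𝕂}
    (h : A *ᵥ v = 0) : NormedSpace.exp A *ᵥ v = v := by
  have hterm : ∀ k ≠ 0, ((k.factorial⁻¹ : 𝕂) • A ^ k) *ᵥ v = 0 := fun k hk => by
    rw [smul_mulVec, pow_mulVec_eq_zero h hk, smul_zero]
  refine ((hasSum_exp A).map (mulVec.addMonoidHomLeft v)
    (continuous_id.matrix_mulVec continuous_const)).unique ?_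
  convert hasSum_single 0 hterm using 1
  · rfl
  · simp

theorem exp_add_smul_one (A : Matrix n n ℝ) (c : ℝ) :
    NormedSpace.exp (A + c • 1) = Real.exp c • NormedSpace.exp A := by
  have hexp : NormedSpace.exp (algebraMap ℝ (Matrix n n ℝ) c) = algebraMap ℝ _ (Real.exp c) := by
    rw [Real.exp_eq_exp_ℝ]
    exact (open scoped Norms.Operator in
      NormedSpace.algebraMap_exp_comm (𝔸 := Matrix n n ℝ) c).symm
  rw [← Algebra.algebraMap_eq_smul_one, exp_add_of_commute _ _ (Algebra.commutes c A).symm, hexp,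
    ← Algebra.commutes, Algebra.smul_def]

theorem exists_nonneg_add_smul_one {R : Type*} [Ring R] [LinearOrder R] [IsOrderedRing R]
    {A : Matrix n n R} (h : ∀ i j, i ≠ j → 0 ≤ A i j) :
    ∃ c : R, ∀ i j, 0 ≤ (A + c • 1) i j := by
  refine ⟨∑ k, |A k k|, fun i j => ?_⟩
  rcases eq_or_ne i j with rfl | hij
  · have hle : |A i i| ≤ ∑ k, |A k k| :=
      Finset.single_le_sum (fun k _ => abs_nonneg (A k k)) (Finset.mem_univ i)
    simp only [add_apply, smul_apply, one_apply_eq, smul_eq_mul, mul_one]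
    exact (neg_le_iff_add_nonneg.1 (neg_abs_le (A i i))).trans (add_le_add le_rfl hle)
  · simpa [one_apply_ne hij] using h i j hij

theorem exp_apply_nonneg_of_nonneg {A : Matrix n n ℝ} (h : ∀ i j, 0 ≤ A i j) (i j : n) :
    0 ≤ NormedSpace.exp A i j :=
  (Pi.hasSum.1 (Pi.hasSum.1 (hasSum_exp A) i) j).nonneg
    fun k => mul_nonneg (by positivity) (pow_apply_nonneg h k i j)

theorem exp_apply_nonneg_of_offDiag_nonneg {A : Matrix n n ℝ} (h : ∀ i j, i ≠ j → 0 ≤ A i j)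
    (i j : n) : 0 ≤ NormedSpace.exp A i j := by
  obtain ⟨c, hc⟩ := exists_nonneg_add_smul_one h
  have hshift := exp_apply_nonneg_of_nonneg hc i j
  rw [exp_add_smul_one, smul_apply, smul_eq_mul] at hshift
  exact (mul_nonneg_iff_of_pos_left (Real.exp_pos c)).1 hshift

end Matrix

/-- For a right intensity matrix `B` (nonnegative off-diagonal entries,
zero row sums), `exp (t • B)` is right stochastic for every `t ≥ 0`. -/
theorem exp_intensity_isStochastic {Z : Type*} [Fintype Z] [DecidableEq Z]
    (B : Matrix Z Z ℝ)
    (hoff : ∀ i j, i ≠ j → 0 ≤ B i j)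
    (hrow : ∀ i, ∑ j, B i j = 0) :
    ∀ t : ℝ, 0 ≤ t →
      (∀ i j, 0 ≤ NormedSpace.exp (t • B) i j) ∧
      (∀ i, ∑ j, NormedSpace.exp (t • B) i j = 1) := by
  intro t ht
  have hoff_t : ∀ i j, i ≠ j → 0 ≤ (t • B) i j := fun i j hij => mul_nonneg ht (hoff i j hij)
  have hrow_t : (t • B) *ᵥ 1 = 0 := by
    ext i
    simp [mulVec, dotProduct, ← Finset.mul_sum, hrow i]
  exact mem_rowStochastic_iff_sum.1
    ⟨exp_apply_nonneg_of_offDiag_nonneg hoff_t, exp_mulVec_of_mulVec_eq_zero hrow_t⟩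
end

section
/- If B is an irreducible right intensity matrix over a finite index set, then its left null space {x : x·B = 0} is one-dimensional and is spanned by a row vector all of whose coordinates are strictly positive. -/
open Matrix

/-- A square matrix is reducible if some nonempty proper subset `I` of the index set
satisfies `A i j = 0` for all `i ∈ I`, `j ∉ I`. -/
def Matrix.IsReducible {Z : Type*} (A : Matrix Z Z ℝ) : Prop :=
  ∃ I : Set Z, I.Nonempty ∧ I ≠ Set.univ ∧ ∀ i ∈ I, ∀ j ∉ I, A i j = 0

/-- Key lemma: a nonnegative left null vector of an irreducible intensity matrix
that vanishes somewhere vanishes everywhere. -/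
lemma key_zero {Z : Type*} [Fintype Z] [DecidableEq Z]
    (B : Matrix Z Z ℝ)
    (hoff : ∀ i j, i ≠ j → 0 ≤ B i j)
    (hirr : ¬ B.IsReducible)
    (w : Z → ℝ) (hw : ∀ i, 0 ≤ w i) (hwB : w ᵥ* B = 0)
    (j0 : Z) (hj0 : w j0 = 0) : w = 0 := by
  have hclosed : ∀ i, 0 < w i → ∀ j, w j = 0 → B i j = 0 := by
    intro i hi j hj
    have hsum : ∑ k, w k * B k j = 0 := by
      have := congrFun hwB j
      simpa [Matrix.vecMul, dotProduct] using this
    have hterms : ∀ k ∈ Finset.univ, 0 ≤ w k * B k j := by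
      intro k _
      by_cases hkj : k = j
      · subst hkj; simp [hj]
      · exact mul_nonneg (hw k) (hoff k j hkj)
    have hzero : w i * B i j = 0 :=
      (Finset.sum_eq_zero_iff_of_nonneg hterms).mp hsum i (Finset.mem_univ i)
    have : B i j = 0 := by
      rcases mul_eq_zero.mp hzero with h | h
      · exact absurd h (ne_of_gt hi)
      · exact h
    exact this
  by_contra hne
  have hI : (Set.Nonempty {i : Z | 0 < w i}) := by
    rcases Function.ne_iff.mp hne with ⟨i, hi⟩
    exact ⟨i, lt_of_le_of_ne (hw i) (Ne.symm (by simpa using hi))⟩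
  apply hirr
  refine ⟨{i : Z | 0 < w i}, hI, ?_, ?_⟩
  · intro h
    have : 0 < w j0 := by
      have := Set.eq_univ_iff_forall.mp h j0
      simpa using this
    exact absurd hj0 (ne_of_gt this)
  · intro i hi j hj
    have hwj : w j = 0 := le_antisymm (not_lt.mp hj) (hw j)
    exact hclosed i hi j hwj

/-- If `x` is a left null vector, so is `|x|`. -/
lemma abs_vecMul {Z : Type*} [Fintype Z] [DecidableEq Z]
    (B : Matrix Z Z ℝ)
    (hoff : ∀ i j, i ≠ j → 0 ≤ B i j)
    (hrow : ∀ i, ∑ j, B i j = 0)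
    (x : Z → ℝ) (hx : x ᵥ* B = 0) :
    (fun i => |x i|) ᵥ* B = 0 := by
  set f : Z → ℝ := fun j => ∑ i, |x i| * B i j with hf
  have hdiag : ∀ j, B j j ≤ 0 := by
    intro j
    have h1 : B j j = -∑ i ∈ Finset.univ.erase j, B j i := by
      have := hrow j
      rw [← Finset.add_sum_erase _ _ (Finset.mem_univ j)] at this
      linarith
    have h2 : 0 ≤ ∑ i ∈ Finset.univ.erase j, B j i :=
      Finset.sum_nonneg fun i hi => hoff j i (Finset.ne_of_mem_erase hi).symm
    rw [h1]; linarith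
  have hfpos : ∀ j, 0 ≤ f j := by
    intro j
    have hsum : ∑ i, x i * B i j = 0 := by
      have := congrFun hx j
      simpa [Matrix.vecMul, dotProduct] using this
    have hsplit : x j * B j j + ∑ i ∈ Finset.univ.erase j, x i * B i j = 0 := by
      rw [Finset.add_sum_erase _ (fun i => x i * B i j) (Finset.mem_univ j)]; exact hsum
    have habs : |x j| * (-B j j) ≤ ∑ i ∈ Finset.univ.erase j, |x i| * B i j := by
      have h1 : |x j * B j j| = |∑ i ∈ Finset.univ.erase j, x i * B i j| := by
        rw [show x j * B j j = -(∑ i ∈ Finset.univ.erase j, x i * B i j) by linarith]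
        rw [abs_neg]
      have h2 : |∑ i ∈ Finset.univ.erase j, x i * B i j|
          ≤ ∑ i ∈ Finset.univ.erase j, |x i| * B i j := by
        refine le_trans (Finset.abs_sum_le_sum_abs _ _) ?_
        refine Finset.sum_le_sum fun i hi => ?_
        rw [abs_mul, abs_of_nonneg (hoff i j (Finset.ne_of_mem_erase hi))]
      calc |x j| * (-B j j) = |x j| * |B j j| := by rw [abs_of_nonpos (hdiag j)]
        _ = |x j * B j j| := (abs_mul _ _).symm
        _ ≤ _ := h1 ▸ h2
    have : f j = |x j| * B j j + ∑ i ∈ Finset.univ.erase j, |x i| * B i j := by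
      show ∑ i, |x i| * B i j = _
      rw [← Finset.add_sum_erase _ (fun i => |x i| * B i j) (Finset.mem_univ j)]
    rw [this]; nlinarith [habs]
  have hfsum : ∑ j, f j = 0 := by
    rw [hf]
    rw [Finset.sum_comm]
    simp_rw [← Finset.mul_sum]
    simp [hrow]
  have hfzero : ∀ j, f j = 0 := by
    intro j
    exact (Finset.sum_eq_zero_iff_of_nonneg fun i _ => hfpos i).mp hfsum j (Finset.mem_univ j)
  funext j
  simpa [Matrix.vecMul, dotProduct, hf] using hfzero j

/-- The left null space of an irreducible right intensity matrix is
one-dimensional, spanned by a row vector with strictly positive coordinates. -/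
theorem irreducible_intensity_nullspace {Z : Type*} [Fintype Z] [DecidableEq Z]
    (B : Matrix Z Z ℝ)
    (hoff : ∀ i j, i ≠ j → 0 ≤ B i j)
    (hrow : ∀ i, ∑ j, B i j = 0)
    (hirr : ¬ B.IsReducible) :
    ∃ x : Z → ℝ, (∀ i, 0 < x i) ∧ x ᵥ* B = 0 ∧
      ∀ y : Z → ℝ, y ᵥ* B = 0 → ∃ c : ℝ, y = c • x := by
  cases isEmpty_or_nonempty Z with
  | inl h =>
    refine ⟨0, fun i => h.elim i, Subsingleton.elim _ _, fun y _ => ⟨0, Subsingleton.elim _ _⟩⟩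
  | inr h =>
    -- det B = 0 since B *ᵥ 1 = 0
    have hdet : B.det = 0 := by
      rw [← Matrix.exists_mulVec_eq_zero_iff]
      refine ⟨fun _ => (1 : ℝ), ?_, ?_⟩
      · intro hc
        have := congrFun hc (Classical.arbitrary Z)
        norm_num at this
      · funext i
        simpa [Matrix.mulVec, dotProduct] using hrow i
    obtain ⟨x0, hx0ne, hx0B⟩ := Matrix.exists_vecMul_eq_zero_iff.mpr hdet
    set x : Z → ℝ := fun i => |x0 i| with hxdef
    have hxB : x ᵥ* B = 0 := abs_vecMul B hoff hrow x0 hx0B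
    have hxnonneg : ∀ i, 0 ≤ x i := fun i => abs_nonneg _
    have hxpos : ∀ i, 0 < x i := by
      by_contra hc
      push_neg at hc
      obtain ⟨j, hj⟩ := hc
      have hj0 : x j = 0 := le_antisymm hj (hxnonneg j)
      have := key_zero B hoff hirr x hxnonneg hxB j hj0
      apply hx0ne
      funext i
      have := congrFun this i
      simpa [hxdef, abs_eq_zero] using this
    refine ⟨x, hxpos, hxB, ?_⟩
    intro y hy
    have hne : (Finset.univ : Finset Z).Nonempty := Finset.univ_nonempty
    set c : ℝ := Finset.univ.inf' hne (fun i => y i / x i) with hc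
    refine ⟨c, ?_⟩
    set z : Z → ℝ := y - c • x with hz
    have hzB : z ᵥ* B = 0 := by
      rw [hz, Matrix.sub_vecMul, Matrix.smul_vecMul, hy, hxB]
      simp
    have hznonneg : ∀ i, 0 ≤ z i := by
      intro i
      have hle : c ≤ y i / x i := Finset.inf'_le _ (Finset.mem_univ i)
      have := (le_div_iff₀ (hxpos i)).mp hle
      simp [hz]
      linarith
    obtain ⟨i0, _, hi0⟩ := Finset.exists_mem_eq_inf' hne (fun i => y i / x i)
    have hzi0 : z i0 = 0 := by
      have : c = y i0 / x i0 := hi0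
      simp [hz, this, div_mul_cancel₀ _ (ne_of_gt (hxpos i0))]
    have hz0 := key_zero B hoff hirr z hznonneg hzB i0 hzi0
    exact sub_eq_zero.mp hz0
end

section
/- Let B be a right intensity matrix over a finite index set Z and let T be the set of transient indices (indices belonging to no recurrence class). If T is nonempty, then Z\T is nonempty and the principal submatrix B_T := (b_{ij})_{i,j∈T} is invertible. -/
open Matrix

/-- `J` is a recurrence class with respect to `A`: the rows of `J` vanish outside `J`
and the principal submatrix `A_J` is irreducible. -/
def Matrix.IsRecClass {Z : Type*} (A : Matrix Z Z ℝ) (J : Finset Z) : Prop :=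
  J.Nonempty ∧ (∀ i ∈ J, ∀ j, j ∉ J → A i j = 0) ∧
    ¬ (A.submatrix (Subtype.val : {x // x ∈ J} → Z) Subtype.val).IsReducible

/-- An index is recurrent if it belongs to some recurrence class. -/
def Matrix.Recurrent {Z : Type*} (A : Matrix Z Z ℝ) (r : Z) : Prop :=
  ∃ J : Finset Z, r ∈ J ∧ A.IsRecClass J

/-- Every nonempty closed set contains a recurrence class. -/
lemma exists_recclass_subset {Z : Type*} [Fintype Z] [DecidableEq Z] (B : Matrix Z Z ℝ) :
    ∀ J : Finset Z, J.Nonempty → (∀ i ∈ J, ∀ j, j ∉ J → B i j = 0) →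
      ∃ K : Finset Z, K ⊆ J ∧ B.IsRecClass K := by
  classical
  intro J
  induction J using Finset.strongInduction with
  | _ J ih =>
    intro hJne hJcl
    by_cases hred : (B.submatrix (Subtype.val : {x // x ∈ J} → Z) Subtype.val).IsReducible
    · obtain ⟨I, hIne, hIuniv, hI0⟩ := hred
      set K : Finset Z := J.filter (fun z => ∃ x ∈ I, (x : Z) = z) with hK
      have hKsub : K ⊆ J := Finset.filter_subset _ _
      have hKlt : K ⊂ J := by
        refine Finset.ssubset_iff_of_subset hKsub |>.mpr ?_
        have : ∃ a : {x // x ∈ J}, a ∉ I := by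
          by_contra h
          push_neg at h
          exact hIuniv (Set.eq_univ_of_forall h)
        obtain ⟨a, ha⟩ := this
        refine ⟨a.1, a.2, ?_⟩
        intro hmem
        rw [hK, Finset.mem_filter] at hmem
        obtain ⟨_, x, hx, hxa⟩ := hmem
        exact ha (by rwa [Subtype.ext hxa] at hx)
      have hKne : K.Nonempty := by
        obtain ⟨x, hx⟩ := hIne
        exact ⟨x.1, by rw [hK, Finset.mem_filter]; exact ⟨x.2, x, hx, rfl⟩⟩
      have hKcl : ∀ i ∈ K, ∀ j, j ∉ K → B i j = 0 := by
        intro i hi j hj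
        rw [hK, Finset.mem_filter] at hi
        obtain ⟨hiJ, x, hx, hxi⟩ := hi
        by_cases hjJ : j ∈ J
        · have hjI : (⟨j, hjJ⟩ : {x // x ∈ J}) ∉ I := by
            intro hmem
            exact hj (by rw [hK, Finset.mem_filter]; exact ⟨hjJ, ⟨j, hjJ⟩, hmem, rfl⟩)
          have := hI0 x hx ⟨j, hjJ⟩ hjI
          simpa [Matrix.submatrix, hxi] using this
        · exact hJcl i hiJ j hjJ
      obtain ⟨K', hK', hrec⟩ := ih K hKlt hKne hKcl
      exact ⟨K', hK'.trans hKsub, hrec⟩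
    · exact ⟨J, subset_rfl, hJne, hJcl, hred⟩

/-- There is always a recurrent index. -/
lemma exists_recurrent {Z : Type*} [Fintype Z] [DecidableEq Z] [Nonempty Z]
    (B : Matrix Z Z ℝ) : ∃ r : Z, B.Recurrent r := by
  classical
  obtain ⟨K, _, hrec⟩ := exists_recclass_subset B Finset.univ Finset.univ_nonempty
    (fun i _ j hj => absurd (Finset.mem_univ j) hj)
  obtain ⟨r, hr⟩ := hrec.1
  exact ⟨r, K, hr, hrec⟩

/-- Key maximum-principle step: a null vector of `B_T` with positive max leads to a
contradiction. -/
lemma key_contradiction {Z : Type*} [Fintype Z] [DecidableEq Z]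
    (B : Matrix Z Z ℝ)
    (hoff : ∀ i j, i ≠ j → 0 ≤ B i j)
    (hrow : ∀ i, ∑ j, B i j = 0)
    (T : Finset Z)
    (hT : ∀ i, i ∈ T ↔ ¬ B.Recurrent i)
    (w : {x // x ∈ T} → ℝ) (M : ℝ) (hM : 0 < M)
    (hle : ∀ j, w j ≤ M) (hex : ∃ i, w i = M)
    (h0 : (B.submatrix (Subtype.val : {x // x ∈ T} → Z) Subtype.val).mulVec w = 0) :
    False := by
  classical
  -- for each index i in T where w attains M, row i vanishes outside T and
  -- outside the argmax set
  have main : ∀ i : {x // x ∈ T}, w i = M →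
      (∀ j, j ∉ T → B i.1 j = 0) ∧ (∀ j : {x // x ∈ T}, w j ≠ M → B i.1 j.1 = 0) := by
    intro i hwi
    have h0i : ∑ j, B i.1 j.1 * w j = 0 := by
      have := congrFun h0 i
      simpa [Matrix.mulVec, dotProduct, Matrix.submatrix] using this
    have hterm : ∀ j : {x // x ∈ T}, B i.1 j.1 * w j ≤ B i.1 j.1 * M := by
      intro j
      by_cases hj : j = i
      · subst hj; rw [hwi]
      · exact mul_le_mul_of_nonneg_left (hle j)
          (hoff _ _ (fun h => hj (Subtype.ext h.symm)))
    have hsum1 : (0:ℝ) ≤ ∑ j : {x // x ∈ T}, B i.1 j.1 * M := by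
      rw [← h0i]
      exact Finset.sum_le_sum (fun j _ => hterm j)
    have hA : ∑ j : {x // x ∈ T}, B i.1 j.1 * M = (∑ j ∈ T, B i.1 j) * M := by
      rw [← Finset.sum_mul]
      congr 1
      exact Finset.sum_coe_sort T (fun j => B i.1 j)
    have hcompl_nonneg : (0:ℝ) ≤ ∑ j ∈ Tᶜ, B i.1 j := by
      refine Finset.sum_nonneg (fun j hj => ?_)
      have hjT : j ∉ T := Finset.mem_compl.mp hj
      exact hoff _ _ (fun h => hjT (h ▸ i.2))
    have hsplit : ∑ j ∈ T, B i.1 j + ∑ j ∈ Tᶜ, B i.1 j = 0 := by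
      rw [Finset.sum_add_sum_compl]; exact hrow i.1
    have hTsum_le : ∑ j ∈ T, B i.1 j ≤ 0 := by linarith
    have hTsum_eq : ∑ j ∈ T, B i.1 j = 0 := by
      have := hsum1
      rw [hA] at this
      nlinarith
    have hcompl_eq : ∑ j ∈ Tᶜ, B i.1 j = 0 := by linarith
    have hout : ∀ j, j ∉ T → B i.1 j = 0 := by
      intro j hj
      have := (Finset.sum_eq_zero_iff_of_nonneg (fun j hj => by
        have hjT : j ∉ T := Finset.mem_compl.mp hj
        exact hoff _ _ (fun h => hjT (h ▸ i.2)))).mp hcompl_eq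
      exact this j (Finset.mem_compl.mpr hj)
    have hdiff : ∑ j : {x // x ∈ T}, (B i.1 j.1 * M - B i.1 j.1 * w j) = 0 := by
      rw [Finset.sum_sub_distrib, h0i, hA, hTsum_eq, zero_mul, sub_zero]
    have heach : ∀ j : {x // x ∈ T}, B i.1 j.1 * M - B i.1 j.1 * w j = 0 := by
      intro j
      have := (Finset.sum_eq_zero_iff_of_nonneg (fun j _ => sub_nonneg.mpr (hterm j))).mp hdiff
      exact this j (Finset.mem_univ j)
    refine ⟨hout, fun j hj => ?_⟩
    have := heach j
    have h1 : B i.1 j.1 * (M - w j) = 0 := by ring_nf; linarith [this]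
    rcases mul_eq_zero.mp h1 with h | h
    · exact h
    · exact absurd (by linarith : w j = M) hj
  -- the argmax set S is a nonempty closed subset of T
  set S : Finset Z := T.filter (fun z => ∃ h : z ∈ T, w ⟨z, h⟩ = M) with hS
  have hSsub : S ⊆ T := Finset.filter_subset _ _
  have hSne : S.Nonempty := by
    obtain ⟨i0, hi0⟩ := hex
    exact ⟨i0.1, by rw [hS, Finset.mem_filter]; exact ⟨i0.2, i0.2, by simpa using hi0⟩⟩
  have hScl : ∀ i ∈ S, ∀ j, j ∉ S → B i j = 0 := by
    intro a ha j hj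
    rw [hS, Finset.mem_filter] at ha
    obtain ⟨haT, haT', hwa⟩ := ha
    obtain ⟨hout, hin⟩ := main ⟨a, haT'⟩ hwa
    by_cases hjT : j ∈ T
    · have : w ⟨j, hjT⟩ ≠ M := by
        intro heq
        exact hj (by rw [hS, Finset.mem_filter]; exact ⟨hjT, hjT, heq⟩)
      exact hin ⟨j, hjT⟩ this
    · exact hout j hjT
  obtain ⟨K, hKS, hrec⟩ := exists_recclass_subset B S hSne hScl
  obtain ⟨r, hr⟩ := hrec.1
  have hrT : r ∈ T := hSsub (hKS hr)
  exact (hT r).mp hrT ⟨K, hr, hrec⟩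

/-- For a right intensity matrix `B`, if the set `T` of transient
(non-recurrent) indices is nonempty, then its complement is nonempty and the
principal submatrix `B_T` is invertible. -/
theorem transient_submatrix_invertible {Z : Type*} [Fintype Z] [DecidableEq Z]
    (B : Matrix Z Z ℝ)
    (hoff : ∀ i j, i ≠ j → 0 ≤ B i j)
    (hrow : ∀ i, ∑ j, B i j = 0)
    (T : Finset Z)
    (hT : ∀ i, i ∈ T ↔ ¬ B.Recurrent i)
    (hne : T.Nonempty) :
    Tᶜ.Nonempty ∧ IsUnit (B.submatrix (Subtype.val : {x // x ∈ T} → Z) (Subtype.val : {x // x ∈ T} → Z)) := by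
  classical
  have hnonempty : Nonempty Z := ⟨hne.choose⟩
  constructor
  · obtain ⟨r, hr⟩ := exists_recurrent B
    refine ⟨r, Finset.mem_compl.mpr ?_⟩
    intro hrT
    exact (hT r).mp hrT hr
  · rw [Matrix.isUnit_iff_isUnit_det, isUnit_iff_ne_zero]
    intro hdet
    obtain ⟨v, hv, hBv⟩ := Matrix.exists_mulVec_eq_zero_iff.mpr hdet
    haveI : Nonempty {x // x ∈ T} := ⟨⟨hne.choose, hne.choose_spec⟩⟩
    set M : ℝ := Finset.univ.sup' Finset.univ_nonempty (fun j => |v j|) with hMdef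
    have hle_all : ∀ j, |v j| ≤ M := by
      intro j
      rw [hMdef]
      exact Finset.le_sup' (fun j => |v j|) (Finset.mem_univ j)
    have hM : 0 < M := by
      obtain ⟨k, hk⟩ := Function.ne_iff.mp hv
      have h1 : 0 < |v k| := abs_pos.mpr hk
      linarith [hle_all k]
    obtain ⟨i0, _, hi0⟩ := Finset.exists_mem_eq_sup' Finset.univ_nonempty (fun j => |v j|)
    rcases (abs_eq hM.le).mp hi0.symm with h | h
    · exact key_contradiction B hoff hrow T hT v M hM
        (fun j => (le_abs_self _).trans (hle_all j)) ⟨i0, h⟩ hBv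
    · refine key_contradiction B hoff hrow T hT (-v) M hM
        (fun j => (neg_le_abs _).trans (hle_all j)) ⟨i0, by simp [h]⟩ ?_
      rw [Matrix.mulVec_neg, hBv, neg_zero]
end

section
/- Let B be a right intensity matrix over Z with nonempty transient index set T and recurrent set R := Z\T, and P := lim_{t→∞} exp(t·B). Then P_T = 0, B_{T,R}·P_R + B_T·P_{T,R} = 0, B_T is invertible, and hence P_{T,R} = −B_T^{-1}·B_{T,R}·P_R. -/
open Matrix Filter

/-!
The limit `P` of the semigroup `exp (t • B)` is absorbing,
`P * exp (s • B) = P = exp (s • B) * P`, so differentiating at `s = 0` gives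
`P * B = 0 = B * P`. Recurrent rows of `B` vanish on transient columns, hence the `(T, T)` block
of `P * B = 0` reads `P_T * B_T = 0` and the `(T, R)` block of `B * P = 0` is the stated
equation. Everything then follows once `B_T` is invertible, which is a maximum principle: if
`B_T w = 0` and `w` attains a positive maximum, the set where the maximum is attained is closed
under `B`, so it contains a recurrence class, which is absurd inside `T`.
-/

def Matrix.IsClosedSet {Z : Type*} (A : Matrix Z Z ℝ) (J : Finset Z) : Prop :=
  ∀ i ∈ J, ∀ j ∉ J, A i j = 0

theorem Matrix.isClosedSet_map_subtype {Z : Type*} {A : Matrix Z Z ℝ} {J : Finset Z}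
    {I : Finset {x // x ∈ J}} (hout : ∀ i ∈ I, ∀ j ∉ J, A i j = 0)
    (hin : ∀ i ∈ I, ∀ j ∉ I, A i j = 0) :
    A.IsClosedSet (I.map (Function.Embedding.subtype _)) := by
  intro i hi j hj
  obtain ⟨i, hiI, rfl⟩ := Finset.mem_map.1 hi
  by_cases hjJ : j ∈ J
  · exact hin i hiI ⟨j, hjJ⟩ fun hjI => hj (Finset.mem_map.2 ⟨_, hjI, rfl⟩)
  · exact hout i hiI j hjJ

theorem Matrix.exists_ssubset_isClosedSet_of_isReducible {Z : Type*} {A : Matrix Z Z ℝ}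
    {J : Finset Z} (hJ : A.IsClosedSet J)
    (hred : (A.submatrix (Subtype.val : {x // x ∈ J} → Z) Subtype.val).IsReducible) :
    ∃ J' ⊂ J, J'.Nonempty ∧ A.IsClosedSet J' := by
  classical
  obtain ⟨I, ⟨i, hi⟩, hI_ne_univ, hI⟩ := hred
  refine ⟨(Finset.univ.filter (· ∈ I)).map (Function.Embedding.subtype _), ⟨?_, ?_⟩,
    ⟨i, Finset.mem_map.2 ⟨i, by simpa using hi, rfl⟩⟩,
    isClosedSet_map_subtype (fun k _ => hJ k k.2) fun k hk l hl => hI k (by simpa using hk) l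
      (by simpa using hl)⟩
  · intro x hx
    obtain ⟨k, -, rfl⟩ := Finset.mem_map.1 hx
    exact k.2
  · refine fun hJsub => hI_ne_univ (Set.eq_univ_of_forall fun k => ?_)
    obtain ⟨l, hl, hlk⟩ := Finset.mem_map.1 (hJsub k.2)
    rw [← Subtype.ext hlk]
    simpa using hl

theorem Matrix.exists_recurrent_of_isClosedSet {Z : Type*} (A : Matrix Z Z ℝ) {J : Finset Z}
    (hne : J.Nonempty) (hJ : A.IsClosedSet J) : ∃ r ∈ J, A.Recurrent r := by
  induction J using Finset.strongInduction with
  | _ J ih =>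
    by_cases hred : (A.submatrix (Subtype.val : {x // x ∈ J} → Z) Subtype.val).IsReducible
    · obtain ⟨J', hJ'J, hJ'ne, hJ'⟩ := exists_ssubset_isClosedSet_of_isReducible hJ hred
      obtain ⟨r, hr, hrec⟩ := ih J' hJ'J hJ'ne hJ'
      exact ⟨r, hJ'J.subset hr, hrec⟩
    · obtain ⟨r, hr⟩ := hne
      exact ⟨r, hr, J, hr, ⟨r, hr⟩, hJ, hred⟩

theorem Matrix.apply_eq_zero_of_recurrent_of_not_recurrent {Z : Type*} {A : Matrix Z Z ℝ}
    {k t : Z} (hk : A.Recurrent k) (ht : ¬ A.Recurrent t) : A k t = 0 := by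
  obtain ⟨J, hkJ, hJne, hJ, hirr⟩ := hk
  exact hJ k hkJ t fun htJ => ht ⟨J, htJ, hJne, hJ, hirr⟩

/-- A discrete maximum principle. -/
theorem Matrix.sum_row_eq_zero_and_apply_eq_zero_of_mulVec_eq_zero {ι : Type*} [Fintype ι]
    {M : Matrix ι ι ℝ} (hoff : ∀ i j, i ≠ j → 0 ≤ M i j) (hrow : ∀ i, ∑ j, M i j ≤ 0)
    {w : ι → ℝ} (hw : M *ᵥ w = 0) {i : ι} (hmax : ∀ j, w j ≤ w i) (hpos : 0 < w i) :
    ∑ j, M i j = 0 ∧ ∀ j, w j ≠ w i → M i j = 0 := by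
  have hterm : ∀ j, 0 ≤ M i j * (w i - w j) := by
    intro j
    rcases eq_or_ne i j with rfl | hij
    · simp
    · exact mul_nonneg (hoff i j hij) (sub_nonneg.2 (hmax j))
  have hsum : ∑ j, M i j * (w i - w j) = w i * ∑ j, M i j := by
    have hwi : ∑ j, M i j * w j = 0 := congrFun hw i
    simp only [mul_sub, Finset.sum_sub_distrib, hwi, sub_zero, Finset.mul_sum, mul_comm]
  have hzero : ∑ j, M i j * (w i - w j) = 0 :=
    le_antisymm (hsum ▸ mul_nonpos_of_nonneg_of_nonpos hpos.le (hrow i))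
      (Finset.sum_nonneg fun j _ => hterm j)
  refine ⟨(mul_eq_zero.1 (hsum ▸ hzero)).resolve_left hpos.ne', fun j hj => ?_⟩
  have := (Finset.sum_eq_zero_iff_of_nonneg fun j _ => hterm j).1 hzero j (Finset.mem_univ j)
  exact (mul_eq_zero.1 this).resolve_right (sub_ne_zero.2 hj.symm)

theorem Matrix.exists_mulVec_eq_zero_of_det_eq_zero {ι : Type*} [Fintype ι] [DecidableEq ι]
    {M : Matrix ι ι ℝ} (hdet : M.det = 0) :
    ∃ w, M *ᵥ w = 0 ∧ ∃ i, 0 < w i ∧ ∀ j, w j ≤ w i := by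
  obtain ⟨v, hv0, hv⟩ := exists_mulVec_eq_zero_iff.2 hdet
  obtain ⟨j, hj⟩ := Function.ne_iff.1 hv0
  obtain ⟨w, hw, hwj⟩ : ∃ w, M *ᵥ w = 0 ∧ 0 < w j := by
    rcases lt_or_gt_of_ne hj with hneg | hpos
    · exact ⟨-v, by rw [mulVec_neg, hv, neg_zero], by simpa using hneg⟩
    · exact ⟨v, hv, hpos⟩
  have : Nonempty ι := ⟨j⟩
  obtain ⟨i, hi⟩ := Finite.exists_max w
  exact ⟨w, hw, i, hwj.trans_le (hi j), hi⟩

section Intensity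

variable {Z : Type*} [Fintype Z] [DecidableEq Z] {B : Matrix Z Z ℝ}

theorem Matrix.sum_submatrix_row_eq_neg (hrow : ∀ i, ∑ j, B i j = 0) (T : Finset Z) (i : Z) :
    ∑ k : {x // x ∈ T}, B i k = -∑ k ∈ Tᶜ, B i k := by
  rw [Finset.sum_coe_sort T (B i), eq_neg_iff_add_eq_zero, Finset.sum_add_sum_compl, hrow]

theorem Matrix.sum_compl_row_nonneg (hoff : ∀ i j, i ≠ j → 0 ≤ B i j) {T : Finset Z} {i : Z}
    (hi : i ∈ T) : 0 ≤ ∑ k ∈ Tᶜ, B i k :=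
  Finset.sum_nonneg fun k hk => hoff i k fun hik => Finset.mem_compl.1 hk (hik ▸ hi)

theorem Matrix.apply_eq_zero_of_sum_submatrix_row_eq_zero (hoff : ∀ i j, i ≠ j → 0 ≤ B i j)
    (hrow : ∀ i, ∑ j, B i j = 0) {T : Finset Z} {i j : Z} (hi : i ∈ T)
    (hsum : ∑ k : {x // x ∈ T}, B i k = 0) (hj : j ∉ T) : B i j = 0 := by
  rw [sum_submatrix_row_eq_neg hrow, neg_eq_zero] at hsum
  exact (Finset.sum_eq_zero_iff_of_nonneg fun k hk =>
    hoff i k fun hik => Finset.mem_compl.1 hk (hik ▸ hi)).1 hsum j (Finset.mem_compl.2 hj)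

theorem Matrix.isUnit_submatrix_of_not_recurrent (hoff : ∀ i j, i ≠ j → 0 ≤ B i j)
    (hrow : ∀ i, ∑ j, B i j = 0) {T : Finset Z} (hT : ∀ i ∈ T, ¬ B.Recurrent i) :
    IsUnit (B.submatrix (Subtype.val : {x // x ∈ T} → Z) (Subtype.val : {x // x ∈ T} → Z)) := by
  rw [isUnit_iff_isUnit_det, isUnit_iff_ne_zero]
  intro hdet
  obtain ⟨w, hw, i, hpos, hmax⟩ := exists_mulVec_eq_zero_of_det_eq_zero hdet
  have hoffT : ∀ k l : {x // x ∈ T}, k ≠ l → 0 ≤ B k l :=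
    fun k l hkl => hoff k l (Subtype.val_injective.ne hkl)
  have hrowT : ∀ k : {x // x ∈ T}, ∑ l : {x // x ∈ T}, B k l ≤ 0 := fun k => by
    rw [sum_submatrix_row_eq_neg hrow, neg_nonpos]
    exact sum_compl_row_nonneg hoff k.2
  have hargmax : ∀ k : {x // x ∈ T}, w k = w i →
      ∑ l : {x // x ∈ T}, B k l = 0 ∧ ∀ l, w l ≠ w k → B k l = 0 :=
    fun k hk => sum_row_eq_zero_and_apply_eq_zero_of_mulVec_eq_zero hoffT hrowT hw
      (hk ▸ hmax) (hk ▸ hpos)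
  have hS : B.IsClosedSet ((Finset.univ.filter fun k => w k = w i).map
      (Function.Embedding.subtype _)) := by
    refine isClosedSet_map_subtype (fun k hk j hj => ?_) (fun k hk j hj => ?_)
    · exact apply_eq_zero_of_sum_submatrix_row_eq_zero hoff hrow k.2
        (hargmax k (Finset.mem_filter.1 hk).2).1 hj
    · have hk := (Finset.mem_filter.1 hk).2
      exact (hargmax k hk).2 j fun hjk =>
        hj (Finset.mem_filter.2 ⟨Finset.mem_univ j, hjk.trans hk⟩)
  obtain ⟨r, hr, hrec⟩ :=
    exists_recurrent_of_isClosedSet B ⟨i, Finset.mem_map.2 ⟨i, by simp, rfl⟩⟩ hS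
  obtain ⟨k, -, rfl⟩ := Finset.mem_map.1 hr
  exact hT k k.2 hrec

end Intensity

section

variable {𝔸 : Type*} [NormedRing 𝔸] [NormedAlgebra ℝ 𝔸] [CompleteSpace 𝔸] {B P : 𝔸}

theorem mul_exp_smul_eq_and_exp_smul_mul_eq_of_tendsto
    (hP : Tendsto (fun t : ℝ => NormedSpace.exp (t • B)) atTop (nhds P)) (s : ℝ) :
    P * NormedSpace.exp (s • B) = P ∧ NormedSpace.exp (s • B) * P = P := by
  have hshift : Tendsto (fun t : ℝ => NormedSpace.exp (t • B) * NormedSpace.exp (s • B))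
      atTop (nhds P) := by
    refine (hP.comp (tendsto_atTop_add_const_right atTop s tendsto_id)).congr fun t => ?_
    simp only [Function.comp_apply, id, add_smul]
    exact NormedSpace.exp_add_of_commute_of_mem_ball (𝕂 := ℝ)
      (((Commute.refl B).smul_left t).smul_right s)
      ((NormedSpace.expSeries_radius_eq_top ℝ 𝔸).symm ▸ edist_lt_top _ _)
      ((NormedSpace.expSeries_radius_eq_top ℝ 𝔸).symm ▸ edist_lt_top _ _)
  constructor
  · exact tendsto_nhds_unique (hP.mul_const _) hshift
  · refine tendsto_nhds_unique (hP.const_mul _) (hshift.congr fun t => ?_)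
    exact (((Commute.refl B).smul_left t).smul_right s).exp.eq.symm ▸ rfl

theorem mul_eq_zero_and_mul_eq_zero_of_tendsto_exp_smul
    (hP : Tendsto (fun t : ℝ => NormedSpace.exp (t • B)) atTop (nhds P)) :
    P * B = 0 ∧ B * P = 0 := by
  have hconst : ∀ s : ℝ, _ := mul_exp_smul_eq_and_exp_smul_mul_eq_of_tendsto hP
  constructor
  · have hd := ((hasDerivAt_exp_smul_const (𝕂 := ℝ) B 0).const_mul P).congr_of_eventuallyEq
      (Eventually.of_forall fun s => (hconst s).1.symm)
    simpa using hd.unique (hasDerivAt_const 0 P)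
  · have hd := ((hasDerivAt_exp_smul_const' (𝕂 := ℝ) B 0).mul_const P).congr_of_eventuallyEq
      (Eventually.of_forall fun s => (hconst s).2.symm)
    simpa using hd.unique (hasDerivAt_const 0 P)

end

theorem Matrix.mul_eq_zero_and_mul_eq_zero_of_tendsto_exp_smul {Z : Type*} [Fintype Z]
    [DecidableEq Z] {B P : Matrix Z Z ℝ}
    (hP : Tendsto (fun t : ℝ => NormedSpace.exp (t • B)) atTop (nhds P)) :
    P * B = 0 ∧ B * P = 0 := by
  let := Matrix.linftyOpNormedRing (n := Z) (α := ℝ)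
  let := Matrix.linftyOpNormedAlgebra (n := Z) (R := ℝ) (α := ℝ)
  have : CompleteSpace (Matrix Z Z ℝ) := FiniteDimensional.complete ℝ _
  exact _root_.mul_eq_zero_and_mul_eq_zero_of_tendsto_exp_smul hP

theorem Matrix.submatrix_mul_eq_add {ι κ m n Z α : Type*} [Fintype Z] [DecidableEq Z]
    [NonUnitalNonAssocSemiring α] (A : Matrix m Z α) (C : Matrix Z n α) (T : Finset Z)
    (r : ι → m) (c : κ → n) :
    (A * C).submatrix r c =
      A.submatrix r (Subtype.val : {x // x ∈ T} → Z) *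
          C.submatrix (Subtype.val : {x // x ∈ T} → Z) c +
        A.submatrix r (Subtype.val : {x // x ∈ Tᶜ} → Z) *
          C.submatrix (Subtype.val : {x // x ∈ Tᶜ} → Z) c := by
  refine Matrix.ext fun i j => ?_
  simp only [submatrix_apply, add_apply, mul_apply]
  rw [Finset.sum_coe_sort T (fun k => A (r i) k * C k (c j)),
    Finset.sum_coe_sort Tᶜ (fun k => A (r i) k * C k (c j)), Finset.sum_add_sum_compl]

/-- Let `B` be a right intensity matrix with nonempty transient index set `T`
and recurrent set `R = Tᶜ`, and `P` the final limit of `exp (t • B)`. Then `P_T = 0`,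
`B_{T,R} * P_R + B_T * P_{T,R} = 0`, `B_T` is invertible, and
`P_{T,R} = -B_T⁻¹ * B_{T,R} * P_R`. -/
theorem final_limit_transient_block {Z : Type*} [Fintype Z] [DecidableEq Z]
    (B : Matrix Z Z ℝ)
    (hoff : ∀ i j, i ≠ j → 0 ≤ B i j)
    (hrow : ∀ i, ∑ j, B i j = 0)
    (T : Finset Z)
    (hT : ∀ i, i ∈ T ↔ ¬ B.Recurrent i)
    (hne : T.Nonempty)
    (P : Matrix Z Z ℝ)
    (hP : Tendsto (fun t : ℝ => NormedSpace.exp (t • B)) atTop (nhds P)) :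
    Tᶜ.Nonempty ∧
    (∀ i ∈ T, ∀ j ∈ T, P i j = 0) ∧
    (B.submatrix (Subtype.val : {x // x ∈ T} → Z) (Subtype.val : {x // x ∈ Tᶜ} → Z)
        * P.submatrix (Subtype.val : {x // x ∈ Tᶜ} → Z) (Subtype.val : {x // x ∈ Tᶜ} → Z)
      + B.submatrix (Subtype.val : {x // x ∈ T} → Z) (Subtype.val : {x // x ∈ T} → Z)
        * P.submatrix (Subtype.val : {x // x ∈ T} → Z) (Subtype.val : {x // x ∈ Tᶜ} → Z)
      = 0) ∧
    IsUnit (B.submatrix (Subtype.val : {x // x ∈ T} → Z) (Subtype.val : {x // x ∈ T} → Z)) ∧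
    P.submatrix (Subtype.val : {x // x ∈ T} → Z) (Subtype.val : {x // x ∈ Tᶜ} → Z)
      = -((B.submatrix (Subtype.val : {x // x ∈ T} → Z) (Subtype.val : {x // x ∈ T} → Z))⁻¹
          * B.submatrix (Subtype.val : {x // x ∈ T} → Z) (Subtype.val : {x // x ∈ Tᶜ} → Z)
          * P.submatrix (Subtype.val : {x // x ∈ Tᶜ} → Z)
              (Subtype.val : {x // x ∈ Tᶜ} → Z)) := by
  obtain ⟨hPB, hBP⟩ := Matrix.mul_eq_zero_and_mul_eq_zero_of_tendsto_exp_smul hP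
  have hT' : ∀ i ∈ T, ¬ B.Recurrent i := fun i => (hT i).1
  have hunit := isUnit_submatrix_of_not_recurrent hoff hrow hT'
  have hRT :
      B.submatrix (Subtype.val : {x // x ∈ Tᶜ} → Z) (Subtype.val : {x // x ∈ T} → Z) = 0 := by
    ext k t
    refine apply_eq_zero_of_recurrent_of_not_recurrent ?_ (hT' t t.2)
    exact not_not.1 fun hk => Finset.mem_compl.1 k.2 ((hT k).2 hk)
  have hPT :
      P.submatrix (Subtype.val : {x // x ∈ T} → Z) (Subtype.val : {x // x ∈ T} → Z) = 0 := by
    have h := congrArg (submatrix · (Subtype.val : {x // x ∈ T} → Z)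
      (Subtype.val : {x // x ∈ T} → Z)) hPB
    rw [submatrix_mul_eq_add P B T, hRT, Matrix.mul_zero, add_zero] at h
    exact hunit.mul_left_eq_zero.1 h
  have hblock := congrArg (submatrix · (Subtype.val : {x // x ∈ T} → Z)
    (Subtype.val : {x // x ∈ Tᶜ} → Z)) hBP
  rw [submatrix_mul_eq_add B P T, add_comm] at hblock
  have : Nonempty Z := hne.nonempty
  obtain ⟨r, -, hr⟩ := exists_recurrent_of_isClosedSet B Finset.univ_nonempty
    fun _ _ j hj => absurd (Finset.mem_univ j) hj
  refine ⟨⟨r, Finset.mem_compl.2 fun hrT => hT' r hrT hr⟩,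
    fun i hi j hj => congrFun₂ hPT ⟨i, hi⟩ ⟨j, hj⟩, hblock, hunit, ?_⟩
  rw [← nonsing_inv_mul_cancel_left _ (P.submatrix _ _) ((isUnit_iff_isUnit_det _).1 hunit),
    eq_neg_of_add_eq_zero_right hblock, Matrix.mul_neg, Matrix.mul_assoc]
end
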